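/- Let L be the closure in ℓ²(π) of the operator L̃ defined on finitely supported sequences by (L̃u)_n = λ_n·u_{n+1} + μ_n·u_{n−1}·1_{n≥2} − (λ_n+μ_n)·u_n. Then for every f ∈ ℓ²(π) and every ρ > 0 the equation (ρ − L)y = f has a unique solution y in the domain of L; this solution satisfies ‖y‖_π ≤ ρ^{−1}·‖f‖_π, and if f is real-valued and nonnegative entrywise then y is nonnegative entrywise. -/

import Mathlib

open Filter MeasureTheory

noncomputable section

/-- Birth rate `λ_n = n · λ̃(n/K)`. -/
def lamK (lam : ℝ → ℝ) (K : ℝ) (n : ℕ) : ℝ := (n : ℝ) * lam ((n : ℝ) / K)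

/-- Death rate `μ_n = n · μ̃(n/K)`. -/
def muK (mu : ℝ → ℝ) (K : ℝ) (n : ℕ) : ℝ := (n : ℝ) * mu ((n : ℝ) / K)

/-- The weights `π_n = (λ₁⋯λ_{n-1})/(μ₁⋯μ_n)` (so `π₁ = 1/μ₁`). -/
def pik (lam mu : ℝ → ℝ) (K : ℝ) (n : ℕ) : ℝ :=
  (∏ j ∈ Finset.Icc 1 (n - 1), lamK lam K j) / (∏ j ∈ Finset.Icc 1 n, muK mu K j)

/-- `H(x) = ∫_{x*}^x log (μ̃(s)/λ̃(s)) ds`. -/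
def Hfun (lam mu : ℝ → ℝ) (xs : ℝ) (x : ℝ) : ℝ :=
  ∫ s in xs..x, Real.log (mu s / lam s)

/-- `u⁰_n = 1 + ∑_{j=1}^{n-1} 1/(λ_j π_j)`. -/
def u0 (lam mu : ℝ → ℝ) (K : ℝ) (n : ℕ) : ℝ :=
  1 + ∑ j ∈ Finset.Icc 1 (n - 1), 1 / (lamK lam K j * pik lam mu K j)

/-- Standing assumptions on the rate functions. -/
structure SA (lam mu : ℝ → ℝ) (xs : ℝ) : Prop where
  lam_pos : ∀ x : ℝ, 0 ≤ x → 0 < lam x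
  mu_pos : ∀ x : ℝ, 0 ≤ x → 0 < mu x
  lam_diff : DifferentiableOn ℝ lam (Set.Ici (0 : ℝ))
  mu_diff : DifferentiableOn ℝ mu (Set.Ici (0 : ℝ))
  lam_mono : MonotoneOn lam (Set.Ici (0 : ℝ))
  mu_mono : MonotoneOn mu (Set.Ici (0 : ℝ))
  ratio_lim : Tendsto (fun x : ℝ => lam x / mu x) atTop (nhds 0)
  mu0_pos : 0 < mu 0
  mu0_lt_lam0 : mu 0 < lam 0
  xs_pos : 0 < xs
  lam_eq_mu_xs : lam xs = mu xs
  xs_unique : ∀ x : ℝ, 0 < x → lam x = mu x → x = xs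
  derivs_ne : deriv lam xs ≠ deriv mu xs
  int_fin : IntegrableOn (fun x : ℝ => 1 / (x * mu x)) (Set.Ici (xs / 2))
  mu_logderiv_bdd : ∃ M : ℝ, ∀ x : ℝ, 0 ≤ x → deriv mu x / mu x ≤ M
  logratio_mono : MonotoneOn (fun x : ℝ => Real.log (mu x / lam x)) (Set.Ici (0 : ℝ))
  H_d1 : ∀ x : ℝ, 0 ≤ x → DifferentiableAt ℝ (Hfun lam mu xs) x
  H_d2 : ∀ x : ℝ, 0 ≤ x → DifferentiableAt ℝ (deriv (Hfun lam mu xs)) x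
  H_d3 : ∀ x : ℝ, 0 ≤ x → DifferentiableAt ℝ (deriv (deriv (Hfun lam mu xs))) x
  H3_bdd : ∃ M : ℝ, ∀ x : ℝ, 0 ≤ x →
    (1 + x ^ 2) * |deriv (deriv (deriv (Hfun lam mu xs))) x| ≤ M


/-- Finitely supported sequences (the domain `𝒟` of the operator `L̃`). -/
def FinSupp (u : ℕ → ℂ) : Prop := ∃ N : ℕ, ∀ n : ℕ, N < n → u n = 0

/-- Membership in the weighted space `ℓ²(π)` (indices `n ≥ 1`). -/
def MemL2pi (lam mu : ℝ → ℝ) (K : ℝ) (u : ℕ → ℂ) : Prop :=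
  Summable (fun n : ℕ => pik lam mu K (n + 1) * ‖u (n + 1)‖ ^ 2)

/-- The inner product `⟨u,v⟩_π = ∑_{n≥1} π_n conj(u_n) v_n`. -/
def ippi (lam mu : ℝ → ℝ) (K : ℝ) (u v : ℕ → ℂ) : ℂ :=
  ∑' n : ℕ, (pik lam mu K (n + 1) : ℂ) * (starRingEnd ℂ) (u (n + 1)) * v (n + 1)

/-- The norm `‖u‖_π`. -/
def normpi (lam mu : ℝ → ℝ) (K : ℝ) (u : ℕ → ℂ) : ℝ :=
  Real.sqrt (∑' n : ℕ, pik lam mu K (n + 1) * ‖u (n + 1)‖ ^ 2)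

/-- The operator `L̃`: `(L̃u)_n = λ_n u_{n+1} + μ_n u_{n-1} 1_{n≥2} - (λ_n+μ_n) u_n`. -/
def Ltilde (lam mu : ℝ → ℝ) (K : ℝ) (u : ℕ → ℂ) (n : ℕ) : ℂ :=
  (lamK lam K n : ℂ) * u (n + 1)
    + (if 2 ≤ n then (muK mu K n : ℂ) * u (n - 1) else 0)
    - ((lamK lam K n : ℂ) + (muK mu K n : ℂ)) * u n

/-- The graph of the closure `L` of `L̃` in `ℓ²(π)`: `(u, w)` belongs to the graph iff
there are finitely supported sequences converging to `u` in `ℓ²(π)` whose images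
under `L̃` converge to `w` in `ℓ²(π)`. -/
def LGraph (lam mu : ℝ → ℝ) (K : ℝ) (u w : ℕ → ℂ) : Prop :=
  MemL2pi lam mu K u ∧ MemL2pi lam mu K w ∧
    ∃ us : ℕ → ℕ → ℂ, (∀ k, FinSupp (us k)) ∧
      Tendsto (fun k => normpi lam mu K (fun n => us k n - u n)) atTop (nhds 0) ∧
      Tendsto (fun k => normpi lam mu K (fun n => Ltilde lam mu K (us k) n - w n))
        atTop (nhds 0)


/-! The weights `π` satisfy detailed balance `π_{n+1} μ_{n+1} = π_n λ_n`, so summation by parts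
makes `L̃` symmetric on finitely supported sequences with `Re ⟨u, L̃ u⟩_π ≤ 0`; this gives the
dissipativity estimate `ρ ‖u‖_π ≤ ‖(ρ - L̃) u‖_π`.

A discrete maximum principle shows that `(ρ - L̃) r ≥ 0` forces `r ≥ 0` for `r ∈ ℓ²(π)`: if `r`
turned negative, the flux `π_n μ_n (r_n - r_{n-1})` would stay below a negative constant `c`,
so `c² ≤ (π_n r_n²)(π_n μ_n²) → 0`. Applied to the real and imaginary parts of rotations of a
solution, it makes `ρ - L̃` injective on `ℓ²(π)`.

By symmetry, a vector orthogonal to the range of `ρ - L̃` on finitely supported sequences solves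
the homogeneous equation, so that range is dense. If `(ρ - L̃) uₖ → f`, dissipativity makes `uₖ`
Cauchy, and its limit `y` lies in the domain of the closure with `(ρ - L) y = f`. Graph limits
agree with `L̃` pointwise, so injectivity gives uniqueness; for real `f ≥ 0`, `conj y` solves the
same equation, so `y` is real, and the maximum principle gives `y ≥ 0`. -/

open ComplexConjugate

structure PositiveRates (lam mu : ℝ → ℝ) (K : ℝ) : Prop where
  lamK_pos : ∀ n : ℕ, 1 ≤ n → 0 < lamK lam K n
  muK_pos : ∀ n : ℕ, 1 ≤ n → 0 < muK mu K n

section Rates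

variable {lam mu : ℝ → ℝ} {K : ℝ}

theorem PositiveRates.of_pos (hK : 0 ≤ K) (hlam : ∀ x : ℝ, 0 ≤ x → 0 < lam x)
    (hmu : ∀ x : ℝ, 0 ≤ x → 0 < mu x) : PositiveRates lam mu K where
  lamK_pos n hn := mul_pos (by exact_mod_cast hn) (hlam _ (by positivity))
  muK_pos n hn := mul_pos (by exact_mod_cast hn) (hmu _ (by positivity))

theorem PositiveRates.pik_pos (hP : PositiveRates lam mu K) (n : ℕ) : 0 < pik lam mu K n :=
  div_pos (Finset.prod_pos fun j hj => hP.lamK_pos j (Finset.mem_Icc.mp hj).1)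
    (Finset.prod_pos fun j hj => hP.muK_pos j (Finset.mem_Icc.mp hj).1)

theorem PositiveRates.pik_succ_mul_muK (hP : PositiveRates lam mu K) {n : ℕ} (hn : 1 ≤ n) :
    pik lam mu K (n + 1) * muK mu K (n + 1) = pik lam mu K n * lamK lam K n := by
  obtain ⟨m, rfl⟩ := Nat.exists_eq_add_of_le' hn
  have hμ := hP.muK_pos (m + 1 + 1) (by omega)
  simp only [pik, Nat.add_sub_cancel, Finset.prod_Icc_succ_top (by omega : 1 ≤ m + 1 + 1),
    Finset.prod_Icc_succ_top (by omega : 1 ≤ m + 1)]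
  field_simp

end Rates

section Operator

variable {lam mu : ℝ → ℝ} {K : ℝ}

theorem Ltilde_one (u : ℕ → ℂ) :
    Ltilde lam mu K u 1 = lamK lam K 1 * u 2 - (lamK lam K 1 + muK mu K 1) * u 1 := by
  simp [Ltilde]

theorem Ltilde_add_two (u : ℕ → ℂ) (n : ℕ) :
    Ltilde lam mu K u (n + 2) = lamK lam K (n + 2) * u (n + 3) + muK mu K (n + 2) * u (n + 1)
      - (lamK lam K (n + 2) + muK mu K (n + 2)) * u (n + 2) := by
  simp [Ltilde]

theorem Ltilde_conj (u : ℕ → ℂ) (n : ℕ) :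
    Ltilde lam mu K (fun k => conj (u k)) n = conj (Ltilde lam mu K u n) := by
  simp only [Ltilde]
  split_ifs <;> simp

theorem Ltilde_eq_zero_of_lt {u : ℕ → ℂ} {N : ℕ} (hu : ∀ n, N < n → u n = 0) {n : ℕ}
    (hn : N + 1 < n) : Ltilde lam mu K u n = 0 := by
  simp only [Ltilde, hu n (by omega), hu (n + 1) (by omega), hu (n - 1) (by omega)]
  simp

theorem tendsto_Ltilde {ι : Type*} {l : Filter ι} {z : ι → ℕ → ℂ} {u : ℕ → ℂ}
    (hz : ∀ n, Tendsto (fun k => z k (n + 1)) l (nhds (u (n + 1)))) {n : ℕ} (hn : 1 ≤ n) :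
    Tendsto (fun k => Ltilde lam mu K (z k) n) l (nhds (Ltilde lam mu K u n)) := by
  match n, hn with
  | 1, _ =>
    simp only [Ltilde_one]
    exact ((hz 1).const_mul _).sub ((hz 0).const_mul _)
  | m + 2, _ =>
    simp only [Ltilde_add_two]
    exact (((hz (m + 2)).const_mul _).add ((hz m).const_mul _)).sub ((hz (m + 1)).const_mul _)

variable (lam mu K) in
def Ltildeₗ : (ℕ → ℂ) →ₗ[ℂ] (ℕ → ℂ) where
  toFun := Ltilde lam mu K
  map_add' _ _ := funext fun _ => by
    simp only [Ltilde, Pi.add_apply]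
    split_ifs <;> ring
  map_smul' _ _ := funext fun _ => by
    simp only [Ltilde, Pi.smul_apply, smul_eq_mul, RingHom.id_apply]
    split_ifs <;> ring

variable (lam mu K) in
def subLtilde (ρ : ℝ) : (ℕ → ℂ) →ₗ[ℂ] (ℕ → ℂ) := (ρ : ℂ) • LinearMap.id - Ltildeₗ lam mu K

theorem subLtilde_apply (ρ : ℝ) (u : ℕ → ℂ) (n : ℕ) :
    subLtilde lam mu K ρ u n = ρ * u n - Ltilde lam mu K u n := rfl

def finSuppSubmodule : Submodule ℂ (ℕ → ℂ) where
  carrier := {u | FinSupp u}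
  add_mem' := by
    rintro u v ⟨N, hN⟩ ⟨M, hM⟩
    exact ⟨max N M, fun n hn => by simp [hN n (by omega), hM n (by omega)]⟩
  zero_mem' := ⟨0, fun _ _ => rfl⟩
  smul_mem' := by
    rintro c u ⟨N, hN⟩
    exact ⟨N, fun n hn => by simp [hN n hn]⟩

variable (lam mu K) in
theorem FinSupp.Ltilde {u : ℕ → ℂ} (hu : FinSupp u) : FinSupp (Ltilde lam mu K u) :=
  let ⟨N, hN⟩ := hu
  ⟨N + 1, fun _ hn => Ltilde_eq_zero_of_lt hN (by omega)⟩

theorem FinSupp.subLtilde {u : ℕ → ℂ} (hu : FinSupp u) (ρ : ℝ) :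
    FinSupp (subLtilde lam mu K ρ u) :=
  sub_mem (Submodule.smul_mem finSuppSubmodule _ hu) (hu.Ltilde lam mu K)

end Operator

section WeightedL2

variable {lam mu : ℝ → ℝ} {K : ℝ}

variable (lam mu K) in
/-- An isometry of `ℓ²(π)` onto `ℓ²(ℕ)`, through which `ℓ²(π)` inherits its Hilbert space
structure. -/
def weighted : (ℕ → ℂ) →ₗ[ℂ] (ℕ → ℂ) where
  toFun u n := (√(pik lam mu K (n + 1)) : ℂ) * u (n + 1)
  map_add' _ _ := funext fun _ => mul_add _ _ _
  map_smul' _ _ := funext fun _ => mul_left_comm _ _ _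

theorem weighted_apply (u : ℕ → ℂ) (n : ℕ) :
    weighted lam mu K u n = (√(pik lam mu K (n + 1)) : ℂ) * u (n + 1) := rfl

theorem PositiveRates.norm_weighted_sq (hP : PositiveRates lam mu K) (u : ℕ → ℂ) (n : ℕ) :
    ‖weighted lam mu K u n‖ ^ 2 = pik lam mu K (n + 1) * ‖u (n + 1)‖ ^ 2 := by
  rw [weighted_apply, norm_mul, mul_pow, Complex.norm_real, Real.norm_eq_abs, sq_abs,
    Real.sq_sqrt (hP.pik_pos _).le]

theorem PositiveRates.memℓp_weighted_iff (hP : PositiveRates lam mu K) {u : ℕ → ℂ} :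
    Memℓp (weighted lam mu K u) 2 ↔ MemL2pi lam mu K u := by
  rw [memℓp_gen_iff (by norm_num), MemL2pi]
  simp [← hP.norm_weighted_sq]

theorem MemL2pi.conj {u : ℕ → ℂ} (hu : MemL2pi lam mu K u) :
    MemL2pi lam mu K (fun n => conj (u n)) := by
  simpa [MemL2pi] using hu

theorem FinSupp.memL2pi {u : ℕ → ℂ} (hu : FinSupp u) : MemL2pi lam mu K u := by
  obtain ⟨N, hN⟩ := hu
  refine summable_of_ne_finset_zero (s := Finset.range N) fun n hn => ?_
  rw [hN (n + 1) (by simp only [Finset.mem_range, not_lt] at hn; omega)]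
  simp

theorem PositiveRates.memL2pi_sub (hP : PositiveRates lam mu K) {u v : ℕ → ℂ}
    (hu : MemL2pi lam mu K u) (hv : MemL2pi lam mu K v) : MemL2pi lam mu K (u - v) := by
  rw [← hP.memℓp_weighted_iff] at *
  simpa using hu.sub hv

theorem PositiveRates.memL2pi_smul (hP : PositiveRates lam mu K) {u : ℕ → ℂ}
    (hu : MemL2pi lam mu K u) (c : ℂ) : MemL2pi lam mu K (c • u) := by
  rw [← hP.memℓp_weighted_iff] at *
  simpa using hu.const_smul c

def PositiveRates.toLp (hP : PositiveRates lam mu K) {u : ℕ → ℂ} (hu : MemL2pi lam mu K u) :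
    lp (fun _ : ℕ => ℂ) 2 :=
  ⟨weighted lam mu K u, hP.memℓp_weighted_iff.2 hu⟩

theorem PositiveRates.coe_toLp (hP : PositiveRates lam mu K) {u : ℕ → ℂ}
    (hu : MemL2pi lam mu K u) : ⇑(hP.toLp hu) = weighted lam mu K u := rfl

theorem PositiveRates.norm_toLp (hP : PositiveRates lam mu K) {u : ℕ → ℂ}
    (hu : MemL2pi lam mu K u) : ‖hP.toLp hu‖ = normpi lam mu K u := by
  have h := lp.norm_rpow_eq_tsum (p := 2) (by norm_num) (hP.toLp hu)
  simp only [ENNReal.toReal_ofNat, Real.rpow_two, hP.coe_toLp, hP.norm_weighted_sq] at h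
  rw [normpi, ← h, Real.sqrt_sq (norm_nonneg _)]

theorem PositiveRates.inner_toLp (hP : PositiveRates lam mu K) {u v : ℕ → ℂ}
    (hu : MemL2pi lam mu K u) (hv : MemL2pi lam mu K v) :
    inner ℂ (hP.toLp hu) (hP.toLp hv) = ippi lam mu K u v := by
  rw [lp.inner_eq_tsum, ippi]
  refine tsum_congr fun n => ?_
  simp only [hP.coe_toLp, weighted_apply, RCLike.inner_apply, map_mul, Complex.conj_ofReal]
  rw [mul_mul_mul_comm, ← Complex.ofReal_mul, Real.mul_self_sqrt (hP.pik_pos _).le]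
  ring

theorem PositiveRates.toLp_sub (hP : PositiveRates lam mu K) {u v : ℕ → ℂ}
    (hu : MemL2pi lam mu K u) (hv : MemL2pi lam mu K v) :
    hP.toLp (hP.memL2pi_sub hu hv) = hP.toLp hu - hP.toLp hv :=
  lp.ext (map_sub _ _ _)

theorem PositiveRates.exists_toLp_eq (hP : PositiveRates lam mu K) (Y : lp (fun _ : ℕ => ℂ) 2) :
    ∃ (y : ℕ → ℂ) (hy : MemL2pi lam mu K y), hP.toLp hy = Y := by
  have hweighted : weighted lam mu K (fun n => ((√(pik lam mu K n))⁻¹ : ℂ) * Y (n - 1)) = Y := by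
    funext n
    have : (√(pik lam mu K (n + 1)) : ℂ) ≠ 0 := by
      exact_mod_cast (Real.sqrt_pos.2 (hP.pik_pos _)).ne'
    simp [weighted_apply, this]
  exact ⟨_, hP.memℓp_weighted_iff.1 (by rw [hweighted]; exact lp.memℓp Y), lp.ext hweighted⟩

theorem PositiveRates.tendsto_apply_of_tendsto_normpi (hP : PositiveRates lam mu K)
    {ι : Type*} {l : Filter ι} {z : ι → ℕ → ℂ} {u : ℕ → ℂ} (hz : ∀ k, MemL2pi lam mu K (z k - u))
    (h : Tendsto (fun k => normpi lam mu K (z k - u)) l (nhds 0)) (n : ℕ) :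
    Tendsto (fun k => z k (n + 1)) l (nhds (u (n + 1))) := by
  have hπ : 0 < √(pik lam mu K (n + 1)) := Real.sqrt_pos.2 (hP.pik_pos _)
  rw [tendsto_iff_norm_sub_tendsto_zero]
  refine squeeze_zero (fun k => norm_nonneg _) (fun k => ?_)
    (by simpa using h.const_mul (√(pik lam mu K (n + 1)))⁻¹)
  rw [← hP.norm_toLp (hz k), le_inv_mul_iff₀ hπ]
  have := lp.norm_apply_le_norm two_ne_zero (hP.toLp (hz k)) n
  simpa [hP.coe_toLp, weighted_apply, abs_of_pos hπ] using this

end WeightedL2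

section Green

variable {lam mu : ℝ → ℝ} {K : ℝ}

/-- Summation by parts; by detailed balance the bulk terms are symmetric in `g` and `u`. -/
theorem PositiveRates.sum_pik_mul_Ltilde (hP : PositiveRates lam mu K) (g u : ℕ → ℂ) (M : ℕ) :
    ∑ n ∈ Finset.range (M + 1), (pik lam mu K (n + 1) : ℂ) * g (n + 1) * Ltilde lam mu K u (n + 1)
      = ((pik lam mu K (M + 1) * lamK lam K (M + 1) : ℝ) : ℂ) * g (M + 1) * (u (M + 2) - u (M + 1))
        - ∑ n ∈ Finset.range M, ((pik lam mu K (n + 1) * lamK lam K (n + 1) : ℝ) : ℂ)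
            * (g (n + 2) - g (n + 1)) * (u (n + 2) - u (n + 1))
        - ((pik lam mu K 1 * muK mu K 1 : ℝ) : ℂ) * g 1 * u 1 := by
  induction M with
  | zero =>
    simp only [zero_add, Finset.range_one, Finset.sum_singleton, Finset.range_zero,
      Finset.sum_empty, Ltilde_one, Complex.ofReal_mul]
    ring
  | succ M ih =>
    have hdb : ((pik lam mu K (M + 2) * muK mu K (M + 2) : ℝ) : ℂ)
        = ((pik lam mu K (M + 1) * lamK lam K (M + 1) : ℝ) : ℂ) :=
      congrArg _ (hP.pik_succ_mul_muK (by omega))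
    rw [Finset.sum_range_succ, ih, Finset.sum_range_succ, Ltilde_add_two]
    push_cast at hdb ⊢
    linear_combination (-g (M + 2)) * (u (M + 2) - u (M + 1)) * hdb

theorem PositiveRates.sum_pik_mul_Ltilde_comm (hP : PositiveRates lam mu K) {u : ℕ → ℂ} {N : ℕ}
    (hu : ∀ n, N < n → u n = 0) (g : ℕ → ℂ) :
    ∑ n ∈ Finset.range (N + 1), (pik lam mu K (n + 1) : ℂ) * g (n + 1) * Ltilde lam mu K u (n + 1)
      = ∑ n ∈ Finset.range (N + 1),
          (pik lam mu K (n + 1) : ℂ) * Ltilde lam mu K g (n + 1) * u (n + 1) := by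
  simp_rw [mul_right_comm _ (Ltilde lam mu K g _)]
  rw [hP.sum_pik_mul_Ltilde, hP.sum_pik_mul_Ltilde, hu (N + 1) (by omega), hu (N + 2) (by omega)]
  simp_rw [mul_right_comm _ (g _ - g _), mul_right_comm _ (g 1)]
  ring

theorem PositiveRates.ippi_subLtilde_comm (hP : PositiveRates lam mu K) (ρ : ℝ) {u : ℕ → ℂ}
    (hu : FinSupp u) (g : ℕ → ℂ) :
    ippi lam mu K g (subLtilde lam mu K ρ u) = ippi lam mu K (subLtilde lam mu K ρ g) u := by
  obtain ⟨N, hN⟩ := hu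
  rw [ippi, ippi, tsum_eq_sum (s := Finset.range (N + 1)) fun n hn => by
      rw [subLtilde_apply, hN (n + 1) (by simp only [Finset.mem_range, not_lt] at hn; omega),
        Ltilde_eq_zero_of_lt hN (by simp only [Finset.mem_range, not_lt] at hn; omega)]
      simp,
    tsum_eq_sum (s := Finset.range (N + 1)) fun n hn => by
      rw [hN (n + 1) (by simp only [Finset.mem_range, not_lt] at hn; omega), mul_zero]]
  have hcomm := hP.sum_pik_mul_Ltilde_comm hN (fun k => conj (g k))
  simp only [Ltilde_conj] at hcomm
  simp only [subLtilde_apply, map_sub, map_mul, Complex.conj_ofReal, mul_sub, sub_mul,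
    Finset.sum_sub_distrib, hcomm]
  congr 1
  exact Finset.sum_congr rfl fun n _ => by ring

theorem PositiveRates.re_ippi_Ltilde_nonpos (hP : PositiveRates lam mu K) {u : ℕ → ℂ}
    (hu : FinSupp u) : (ippi lam mu K u (Ltilde lam mu K u)).re ≤ 0 := by
  obtain ⟨N, hN⟩ := hu
  rw [ippi, tsum_eq_sum (s := Finset.range (N + 1)) fun n hn => by
      rw [Ltilde_eq_zero_of_lt hN (by simp only [Finset.mem_range, not_lt] at hn; omega), mul_zero],
    hP.sum_pik_mul_Ltilde (fun k => conj (u k)), hN (N + 1) (by omega), hN (N + 2) (by omega)]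
  simp only [sub_self, mul_zero, zero_sub, ← map_sub, mul_assoc, Complex.conj_mul']
  norm_cast
  have hbulk : 0 ≤ ∑ n ∈ Finset.range N,
      pik lam mu K (n + 1) * lamK lam K (n + 1) * ‖u (n + 2) - u (n + 1)‖ ^ 2 :=
    Finset.sum_nonneg fun n _ => by
      have := hP.pik_pos (n + 1)
      have := hP.lamK_pos (n + 1) (by omega)
      positivity
  have hπ := hP.pik_pos 1
  have hμ := hP.muK_pos 1 le_rfl
  have hboundary : 0 ≤ pik lam mu K 1 * muK mu K 1 * ‖u 1‖ ^ 2 := by positivity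
  linarith

theorem PositiveRates.mul_normpi_le_normpi_subLtilde (hP : PositiveRates lam mu K) (ρ : ℝ)
    {u : ℕ → ℂ} (hu : FinSupp u) :
    ρ * normpi lam mu K u ≤ normpi lam mu K (subLtilde lam mu K ρ u) := by
  have hu₂ : MemL2pi lam mu K u := hu.memL2pi
  have hLu₂ : MemL2pi lam mu K (Ltilde lam mu K u) := (hu.Ltilde lam mu K).memL2pi
  have hRu₂ : MemL2pi lam mu K (subLtilde lam mu K ρ u) := (hu.subLtilde ρ).memL2pi
  have hsplit : hP.toLp hRu₂ = (ρ : ℂ) • hP.toLp hu₂ - hP.toLp hLu₂ := lp.ext <| by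
    simp only [lp.coeFn_sub, lp.coeFn_smul, hP.coe_toLp, subLtilde, LinearMap.sub_apply,
      LinearMap.smul_apply, LinearMap.id_apply, Ltildeₗ, LinearMap.coe_mk, AddHom.coe_mk,
      map_sub, map_smul]
  have hsq : ρ * normpi lam mu K u ^ 2
      ≤ normpi lam mu K u * normpi lam mu K (subLtilde lam mu K ρ u) :=
    calc ρ * normpi lam mu K u ^ 2
        ≤ ρ * normpi lam mu K u ^ 2 - (ippi lam mu K u (Ltilde lam mu K u)).re := by
          linarith [hP.re_ippi_Ltilde_nonpos hu]
      _ = (inner ℂ (hP.toLp hu₂) (hP.toLp hRu₂)).re := by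
          rw [hsplit, inner_sub_right, inner_smul_right, inner_self_eq_norm_sq_to_K,
            hP.inner_toLp, hP.norm_toLp]
          simp [← Complex.ofReal_pow]
      _ ≤ normpi lam mu K u * normpi lam mu K (subLtilde lam mu K ρ u) := by
          rw [← hP.norm_toLp hu₂, ← hP.norm_toLp hRu₂]
          exact (Complex.re_le_norm _).trans (norm_inner_le_norm _ _)
  rcases (show 0 ≤ normpi lam mu K u from Real.sqrt_nonneg _).eq_or_lt with h | h
  · rw [← h, mul_zero]
    exact Real.sqrt_nonneg _
  · nlinarith

end Green

section MaximumPrinciple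

variable {lam mu : ℝ → ℝ} {K : ℝ} {ρ : ℝ} {r : ℕ → ℝ}

theorem PositiveRates.flux_succ_le (hP : PositiveRates lam mu K)
    (hrec : ∀ n, 1 ≤ n →
      lamK lam K n * (r (n + 1) - r n) ≤ ρ * r n + muK mu K n * (r n - r (n - 1)))
    {n : ℕ} (hn : 1 ≤ n) :
    pik lam mu K (n + 1) * muK mu K (n + 1) * (r (n + 1) - r n)
      ≤ ρ * pik lam mu K n * r n + pik lam mu K n * muK mu K n * (r n - r (n - 1)) := by
  rw [hP.pik_succ_mul_muK hn]
  have := mul_le_mul_of_nonneg_left (hrec n hn) (hP.pik_pos n).le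
  linarith

theorem PositiveRates.flux_le_of_neg (hP : PositiveRates lam mu K) (hρ : 0 < ρ)
    (hrec : ∀ n, 1 ≤ n →
      lamK lam K n * (r (n + 1) - r n) ≤ ρ * r n + muK mu K n * (r n - r (n - 1)))
    {m : ℕ} (hm : 1 ≤ m) (hrm : r m < 0) (hrm' : 0 ≤ r (m - 1)) (j : ℕ) :
    r (m + j) ≤ r m ∧
      pik lam mu K (m + j + 1) * muK mu K (m + j + 1) * (r (m + j + 1) - r (m + j))
        ≤ ρ * pik lam mu K m * r m := by
  induction j with
  | zero =>
    have hflux := hP.flux_succ_le hrec hm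
    have := mul_nonpos_of_nonneg_of_nonpos
      (mul_pos (hP.pik_pos m) (hP.muK_pos m hm)).le (by linarith : r m - r (m - 1) ≤ 0)
    simp only [add_zero]
    exact ⟨le_rfl, by linarith⟩
  | succ j ih =>
    have hπμ := mul_pos (hP.pik_pos (m + j + 1)) (hP.muK_pos (m + j + 1) (by omega))
    have hc : ρ * pik lam mu K m * r m < 0 :=
      mul_neg_of_pos_of_neg (mul_pos hρ (hP.pik_pos m)) hrm
    have hdec : r (m + j + 1) < r (m + j) := by
      by_contra! h
      linarith [ih.2, mul_nonneg hπμ.le (sub_nonneg.2 h)]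
    have hflux := hP.flux_succ_le hrec (n := m + j + 1) (by omega)
    have := mul_nonpos_of_nonneg_of_nonpos (mul_pos hρ (hP.pik_pos (m + j + 1))).le
      (by linarith [ih.1] : r (m + j + 1) ≤ 0)
    simp only [← add_assoc, Nat.add_sub_cancel] at hflux ⊢
    exact ⟨by linarith [ih.1], by linarith [ih.2]⟩

/-- The convention `r 0 = 0` matches `L̃`, which omits `μ₁ u₀` from `(L̃ u)₁`. -/
theorem PositiveRates.nonneg_of_supersolution (hP : PositiveRates lam mu K)
    (hpimu : Tendsto (fun n : ℕ => pik lam mu K n * muK mu K n ^ 2) atTop (nhds 0))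
    (hρ : 0 < ρ) (hr0 : r 0 = 0) (hr : Tendsto (fun n => pik lam mu K n * r n ^ 2) atTop (nhds 0))
    (hrec : ∀ n, 1 ≤ n →
      lamK lam K n * (r (n + 1) - r n) ≤ ρ * r n + muK mu K n * (r n - r (n - 1)))
    (n : ℕ) : 0 ≤ r n := by
  classical
  by_contra! hneg
  have hex : ∃ n, r n < 0 := ⟨n, hneg⟩
  set m := Nat.find hex
  have hrm : r m < 0 := Nat.find_spec hex
  have hm : 1 ≤ m := Nat.one_le_iff_ne_zero.2 fun h => by simp [h, hr0] at hrm
  have hrm' : 0 ≤ r (m - 1) := not_lt.1 (Nat.find_min hex (by omega))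
  set c := ρ * pik lam mu K m * r m
  have hc : c < 0 := mul_neg_of_pos_of_neg (mul_pos hρ (hP.pik_pos m)) hrm
  have hbound : ∀ᶠ n in atTop,
      c ^ 2 ≤ pik lam mu K n * r n ^ 2 * (pik lam mu K n * muK mu K n ^ 2) := by
    refine eventually_atTop.2 ⟨m + 1, fun n hn => ?_⟩
    obtain ⟨j, rfl⟩ : ∃ j, n = m + j + 1 := ⟨n - m - 1, by omega⟩
    obtain ⟨hdec, hflux⟩ := hP.flux_le_of_neg hρ hrec hm hrm hrm' j
    have hπμ := mul_pos (hP.pik_pos (m + j + 1)) (hP.muK_pos (m + j + 1) (by omega))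
    have : pik lam mu K (m + j + 1) * muK mu K (m + j + 1) * r (m + j + 1) ≤ c := by nlinarith
    nlinarith
  have := ge_of_tendsto (by simpa using hr.mul hpimu) hbound
  nlinarith

theorem PositiveRates.re_nonneg_of_re_subLtilde_nonneg (hP : PositiveRates lam mu K)
    (hpimu : Tendsto (fun n : ℕ => pik lam mu K n * muK mu K n ^ 2) atTop (nhds 0))
    (hρ : 0 < ρ) {u : ℕ → ℂ} (hu : MemL2pi lam mu K u)
    (h : ∀ n, 1 ≤ n → 0 ≤ (subLtilde lam mu K ρ u n).re) {n : ℕ} (hn : 1 ≤ n) :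
    0 ≤ (u n).re := by
  set r : ℕ → ℝ := fun n => if n = 0 then 0 else (u n).re
  have hr : ∀ n, 1 ≤ n → r n = (u n).re := fun n hn => if_neg (by omega)
  have hr_sq : Tendsto (fun n => pik lam mu K n * r n ^ 2) atTop (nhds 0) := by
    rw [← tendsto_add_atTop_iff_nat 1]
    refine squeeze_zero (fun n => by have := hP.pik_pos (n + 1); positivity) (fun n => ?_)
      hu.tendsto_atTop_zero
    rw [hr _ (by omega), ← sq_abs (u (n + 1)).re]
    have := hP.pik_pos (n + 1)
    gcongr
    exact Complex.abs_re_le_norm _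
  have hrec : ∀ n, 1 ≤ n →
      lamK lam K n * (r (n + 1) - r n) ≤ ρ * r n + muK mu K n * (r n - r (n - 1)) := by
    intro n hn
    have hn' := h n hn
    match n, hn with
    | 1, _ =>
      simp only [subLtilde_apply, Ltilde_one, ← Complex.ofReal_add, Complex.sub_re,
        Complex.re_ofReal_mul] at hn'
      rw [hr 1 le_rfl, hr 2 one_le_two, show r (1 - 1) = 0 from if_pos rfl]
      linarith
    | m + 2, _ =>
      simp only [subLtilde_apply, Ltilde_add_two, ← Complex.ofReal_add, Complex.sub_re,
        Complex.add_re, Complex.re_ofReal_mul] at hn'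
      show lamK lam K (m + 2) * (r (m + 3) - r (m + 2))
        ≤ ρ * r (m + 2) + muK mu K (m + 2) * (r (m + 2) - r (m + 1))
      rw [hr (m + 3) (by omega), hr (m + 2) (by omega), hr (m + 1) (by omega)]
      linarith
  simpa [hr n hn] using hP.nonneg_of_supersolution hpimu hρ (by simp [r]) hr_sq hrec n

theorem PositiveRates.eq_zero_of_subLtilde_eq_zero (hP : PositiveRates lam mu K)
    (hpimu : Tendsto (fun n : ℕ => pik lam mu K n * muK mu K n ^ 2) atTop (nhds 0))
    (hρ : 0 < ρ) {g : ℕ → ℂ} (hg : MemL2pi lam mu K g)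
    (h : ∀ n, 1 ≤ n → subLtilde lam mu K ρ g n = 0) {n : ℕ} (hn : 1 ≤ n) : g n = 0 := by
  have hrot : ∀ c : ℂ, 0 ≤ (c * g n).re := fun c =>
    hP.re_nonneg_of_re_subLtilde_nonneg hpimu hρ (hP.memL2pi_smul hg c)
      (fun m hm => by rw [map_smul, Pi.smul_apply, h m hm, smul_zero, Complex.zero_re]) hn
  have h₁ := hrot 1
  have h₂ := hrot (-1)
  have h₃ := hrot Complex.I
  have h₄ := hrot (-Complex.I)
  simp only [one_mul, neg_mul, Complex.neg_re, Complex.I_mul_re, neg_neg] at h₁ h₂ h₃ h₄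
  exact Complex.ext (by rw [Complex.zero_re]; linarith) (by rw [Complex.zero_im]; linarith)

theorem PositiveRates.eq_of_subLtilde_eq (hP : PositiveRates lam mu K)
    (hpimu : Tendsto (fun n : ℕ => pik lam mu K n * muK mu K n ^ 2) atTop (nhds 0))
    (hρ : 0 < ρ) {y₁ y₂ : ℕ → ℂ} (h₁ : MemL2pi lam mu K y₁) (h₂ : MemL2pi lam mu K y₂)
    (h : ∀ n, 1 ≤ n → subLtilde lam mu K ρ y₁ n = subLtilde lam mu K ρ y₂ n) {n : ℕ}
    (hn : 1 ≤ n) : y₁ n = y₂ n :=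
  sub_eq_zero.1 <| hP.eq_zero_of_subLtilde_eq_zero hpimu hρ (hP.memL2pi_sub h₁ h₂)
    (fun m hm => by rw [map_sub, Pi.sub_apply, h m hm, sub_self]) hn

theorem PositiveRates.nonneg_of_subLtilde_nonneg (hP : PositiveRates lam mu K)
    (hpimu : Tendsto (fun n : ℕ => pik lam mu K n * muK mu K n ^ 2) atTop (nhds 0))
    (hρ : 0 < ρ) {y : ℕ → ℂ} (hy : MemL2pi lam mu K y)
    (h : ∀ n, 1 ≤ n → (subLtilde lam mu K ρ y n).im = 0 ∧ 0 ≤ (subLtilde lam mu K ρ y n).re)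
    {n : ℕ} (hn : 1 ≤ n) : (y n).im = 0 ∧ 0 ≤ (y n).re := by
  have hconj : conj (y n) = y n :=
    hP.eq_of_subLtilde_eq hpimu hρ hy.conj hy (fun m hm => by
      rw [subLtilde_apply, Ltilde_conj, ← Complex.conj_ofReal, ← map_mul, ← map_sub,
        ← subLtilde_apply, Complex.conj_eq_iff_im.2 (h m hm).1]) hn
  exact ⟨Complex.conj_eq_iff_im.1 hconj,
    hP.re_nonneg_of_re_subLtilde_nonneg hpimu hρ hy (fun m hm => (h m hm).2) hn⟩

end MaximumPrinciple

section Closure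

variable {lam mu : ℝ → ℝ} {K : ℝ} {ρ : ℝ}

variable (lam mu K) in
/-- The range of `ρ - L̃` on finitely supported sequences, transported to `ℓ²(ℕ)`. -/
def subLtildeRange (ρ : ℝ) : Submodule ℂ (lp (fun _ : ℕ => ℂ) 2) where
  carrier := {v | ⇑v ∈ finSuppSubmodule.map (weighted lam mu K ∘ₗ subLtilde lam mu K ρ)}
  add_mem' ha hb := by simpa only [Set.mem_ofPred_eq, lp.coeFn_add] using add_mem ha hb
  zero_mem' := by simpa only [Set.mem_ofPred_eq, lp.coeFn_zero] using zero_mem _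
  smul_mem' c _ ha := by
    simpa only [Set.mem_ofPred_eq, lp.coeFn_smul] using Submodule.smul_mem _ c ha

theorem PositiveRates.dense_subLtildeRange (hP : PositiveRates lam mu K)
    (hpimu : Tendsto (fun n : ℕ => pik lam mu K n * muK mu K n ^ 2) atTop (nhds 0))
    (hρ : 0 < ρ) : Dense (subLtildeRange lam mu K ρ : Set (lp (fun _ : ℕ => ℂ) 2)) := by
  rw [Submodule.dense_iff_topologicalClosure_eq_top, Submodule.topologicalClosure_eq_top_iff,
    Submodule.eq_bot_iff]
  intro x hx
  obtain ⟨g, hg, rfl⟩ := hP.exists_toLp_eq x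
  -- test against `(ρ - L̃) δₙ` and move `ρ - L̃` to the other side
  have hsol : ∀ n, 1 ≤ n → subLtilde lam mu K ρ g n = 0 := by
    intro n hn
    have hδ : FinSupp (Pi.single n (1 : ℂ)) := ⟨n, fun k hk => Pi.single_eq_of_ne (by omega) _⟩
    have hmem : hP.toLp (hδ.subLtilde ρ).memL2pi ∈ subLtildeRange lam mu K ρ := ⟨_, hδ, rfl⟩
    have h0 := (Submodule.mem_orthogonal' _ _).1 hx _ hmem
    rw [hP.inner_toLp, hP.ippi_subLtilde_comm ρ hδ, ippi, tsum_eq_single (n - 1) fun k hk => by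
      rw [Pi.single_eq_of_ne (by omega), mul_zero]] at h0
    simpa [Nat.sub_add_cancel hn, (hP.pik_pos n).ne'] using h0
  refine lp.ext (funext fun n => ?_)
  rw [hP.coe_toLp, weighted_apply, hP.eq_zero_of_subLtilde_eq_zero hpimu hρ hg hsol n.succ_pos,
    mul_zero]
  rfl

theorem CauchySeq.of_dist_le_mul {α β : Type*} [PseudoMetricSpace α] [PseudoMetricSpace β]
    {a : ℕ → α} {v : ℕ → β} (hv : CauchySeq v) {C : ℝ}
    (h : ∀ j k, dist (a j) (a k) ≤ C * dist (v j) (v k)) : CauchySeq a := by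
  rw [cauchySeq_iff_tendsto_dist_atTop_0] at hv ⊢
  exact squeeze_zero (fun _ => dist_nonneg) (fun p => h p.1 p.2) (by simpa using hv.const_mul C)

theorem PositiveRates.exists_LGraph_solution (hP : PositiveRates lam mu K)
    (hpimu : Tendsto (fun n : ℕ => pik lam mu K n * muK mu K n ^ 2) atTop (nhds 0))
    (hρ : 0 < ρ) {f : ℕ → ℂ} (hf : MemL2pi lam mu K f) :
    ∃ y w : ℕ → ℂ, LGraph lam mu K y w ∧ (∀ n, (ρ : ℂ) * y n - w n = f n) ∧
      normpi lam mu K y ≤ ρ⁻¹ * normpi lam mu K f := by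
  obtain ⟨v, hvR, hv⟩ := mem_closure_iff_seq_limit.1 (hP.dense_subLtildeRange hpimu hρ (hP.toLp hf))
  choose us hus hvus using hvR
  have hus₂ (k : ℕ) : MemL2pi lam mu K (us k) := (hus k).memL2pi
  have hvk (k : ℕ) : v k = hP.toLp ((hus k).subLtilde ρ).memL2pi := lp.ext (hvus k).symm
  have hdiss (j k : ℕ) :
      dist (hP.toLp (hus₂ j)) (hP.toLp (hus₂ k)) ≤ ρ⁻¹ * dist (v j) (v k) := by
    rw [dist_eq_norm, dist_eq_norm, hvk, hvk, ← hP.toLp_sub, ← hP.toLp_sub, hP.norm_toLp,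
      hP.norm_toLp, ← map_sub, le_inv_mul_iff₀ hρ]
    exact hP.mul_normpi_le_normpi_subLtilde ρ (sub_mem (hus j) (hus k))
  obtain ⟨Y, hY⟩ := cauchySeq_tendsto_of_complete (hv.cauchySeq.of_dist_le_mul hdiss)
  obtain ⟨y, hy, rfl⟩ := hP.exists_toLp_eq Y
  have hw := hP.memL2pi_sub (hP.memL2pi_smul hy ρ) hf
  refine ⟨y, (ρ : ℂ) • y - f, ⟨hy, hw, us, hus, ?_, ?_⟩, fun n => by simp, ?_⟩
  · refine (?_ : Tendsto (fun k => normpi lam mu K (us k - y)) atTop (nhds 0))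
    simpa only [dist_eq_norm, ← hP.toLp_sub, hP.norm_toLp] using
      tendsto_iff_dist_tendsto_zero.1 hY
  · have hL (k : ℕ) : hP.toLp (hP.memL2pi_sub ((hus k).Ltilde lam mu K).memL2pi hw)
        = (ρ : ℂ) • (hP.toLp (hus₂ k) - hP.toLp hy) - (v k - hP.toLp hf) := lp.ext <| by
      simp only [lp.coeFn_sub, lp.coeFn_smul, hP.coe_toLp, ← hvus k, LinearMap.comp_apply,
        ← map_sub, ← map_smul]
      congr 1
      ext n
      simp only [Pi.sub_apply, Pi.smul_apply, smul_eq_mul, subLtilde_apply]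
      ring
    have := ((hY.sub_const (hP.toLp hy)).const_smul (ρ : ℂ)).sub (hv.sub_const (hP.toLp hf))
    simp only [sub_self, smul_zero, ← hL] at this
    refine (?_ : Tendsto (fun k => normpi lam mu K (Ltilde lam mu K (us k) - ((ρ : ℂ) • y - f)))
      atTop (nhds 0))
    simpa [hP.norm_toLp] using tendsto_zero_iff_norm_tendsto_zero.1 this
  · rw [← hP.norm_toLp hy, ← hP.norm_toLp hf]
    refine le_of_tendsto_of_tendsto' hY.norm (hv.norm.const_mul ρ⁻¹) fun k => ?_
    rw [hvk, hP.norm_toLp, hP.norm_toLp, le_inv_mul_iff₀ hρ]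
    exact hP.mul_normpi_le_normpi_subLtilde ρ (hus k)

theorem PositiveRates.eq_Ltilde_of_LGraph (hP : PositiveRates lam mu K) {y w : ℕ → ℂ}
    (h : LGraph lam mu K y w) {n : ℕ} (hn : 1 ≤ n) : w n = Ltilde lam mu K y n := by
  obtain ⟨hy, hw, us, hus, hconv, hLconv⟩ := h
  have hcoord := hP.tendsto_apply_of_tendsto_normpi
    (fun k => hP.memL2pi_sub (hus k).memL2pi hy) hconv
  have hLcoord := hP.tendsto_apply_of_tendsto_normpi (z := fun k => Ltilde lam mu K (us k))
    (fun k => hP.memL2pi_sub ((hus k).Ltilde lam mu K).memL2pi hw) hLconv (n - 1)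
  rw [Nat.sub_add_cancel hn] at hLcoord
  exact tendsto_nhds_unique hLcoord (tendsto_Ltilde hcoord hn)

end Closure

/-- For every `f ∈ ℓ²(π)` and `ρ > 0`, the resolvent equation
`(ρ - L) y = f` has a unique solution `y` in the domain of `L`, with
`‖y‖_π ≤ ρ⁻¹ ‖f‖_π`, and `y ≥ 0` whenever `f ≥ 0`. -/
theorem stmt_2 (lam mu : ℝ → ℝ) (xs : ℝ) (hSA : SA lam mu xs) (K : ℝ) (hK : 1 < K)
    (hpimu : Tendsto (fun n : ℕ => pik lam mu K n * muK mu K n ^ 2) atTop (nhds 0))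
    (f : ℕ → ℂ) (hf : MemL2pi lam mu K f) (ρ : ℝ) (hρ : 0 < ρ) :
    ∃ y w : ℕ → ℂ, LGraph lam mu K y w ∧
      (∀ n : ℕ, 1 ≤ n → (ρ : ℂ) * y n - w n = f n) ∧
      (∀ y' w' : ℕ → ℂ, LGraph lam mu K y' w' →
        (∀ n : ℕ, 1 ≤ n → (ρ : ℂ) * y' n - w' n = f n) →
        ∀ n : ℕ, 1 ≤ n → y' n = y n) ∧
      normpi lam mu K y ≤ ρ⁻¹ * normpi lam mu K f ∧
      ((∀ n : ℕ, 1 ≤ n → (f n).im = 0 ∧ 0 ≤ (f n).re) →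
        ∀ n : ℕ, 1 ≤ n → (y n).im = 0 ∧ 0 ≤ (y n).re) := by
  have hP : PositiveRates lam mu K := .of_pos (by linarith) hSA.lam_pos hSA.mu_pos
  obtain ⟨y, w, hG, hyw, hnorm⟩ := hP.exists_LGraph_solution hpimu hρ hf
  have hsolves {y w : ℕ → ℂ} (hG : LGraph lam mu K y w)
      (hyw : ∀ n, 1 ≤ n → (ρ : ℂ) * y n - w n = f n) {n : ℕ} (hn : 1 ≤ n) :
      subLtilde lam mu K ρ y n = f n := by
    rw [subLtilde_apply, ← hP.eq_Ltilde_of_LGraph hG hn, hyw n hn]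
  refine ⟨y, w, hG, fun n _ => hyw n, fun y' w' hG' hyw' n hn => ?_, hnorm, fun hf0 n hn => ?_⟩
  · exact hP.eq_of_subLtilde_eq hpimu hρ hG'.1 hG.1
      (fun m hm => by rw [hsolves hG' hyw' hm, hsolves hG (fun k _ => hyw k) hm]) hn
  · exact hP.nonneg_of_subLtilde_nonneg hpimu hρ hG.1
      (fun m hm => hsolves hG (fun k _ => hyw k) hm ▸ hf0 m hm) hn
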